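/- Let $Z$ be an object of a $k$-additive category with $\mathrm{End}(Z)$ local and finite-dimensional over $k$, let $Y$ be another object, and let $g_2 : Z \to Y$ be a nonzero morphism (more precisely the relevant component of a triangle map). Fix a $k$-subspace $N \subseteq \mathrm{End}(Y)$ consisting of nilpotent endomorphisms and closed under addition. Then the set $G' = \{ d' \in \mathrm{End}(Z) : d' g_2 = g_2 b' \text{ for some } b' \in N \}$ is a $k$-subspace of $\mathrm{End}(Z)$, and every element of $G'$ is nilpotent, so $1 - d'$ is invertible for all $d' \in G'$. -/

import Mathlib

/-!
If `d ≫ g = g ≫ b` with `b` nilpotent, then `dⁿ ≫ g = g ≫ bⁿ = 0` for large `n`, so `d` is not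
invertible as `g ≠ 0`. The ring `End Z` is Artinian, being finite-dimensional, and local, so its
nonunits lie in the Jacobson radical, which is a nilpotent ideal; hence `d` is nilpotent.
-/

namespace IsLocalRing

variable {R : Type*} [Ring R] [IsLocalRing R]

theorem mem_jacobson_of_not_isUnit [IsDedekindFiniteMonoid R] {x : R} (hx : ¬IsUnit x) :
    x ∈ Ring.jacobson R := by
  rw [← Ideal.jacobson_bot, Ideal.mem_jacobson_iff]
  intro y
  have hyx : ¬IsUnit (-(y * x)) := fun h =>
    hx (isUnit_of_mul_isUnit_right ((IsUnit.neg_iff _).1 h))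
  obtain ⟨u, hu⟩ :=
    (isUnit_or_isUnit_of_add_one (neg_add_cancel_left (y * x) 1)).resolve_left hyx
  refine ⟨↑u⁻¹, ?_⟩
  rw [Ideal.mem_bot, sub_eq_zero, mul_assoc, ← mul_add_one, ← hu, u.inv_mul]

theorem isNilpotent_of_not_isUnit [IsArtinianRing R] {x : R} (hx : ¬IsUnit x) :
    IsNilpotent x := by
  obtain ⟨n, hn⟩ := IsArtinianRing.isNilpotent_jacobson_bot (R := R)
  have hxn := Ideal.pow_mem_pow (Ideal.jacobson_bot (R := R) ▸ mem_jacobson_of_not_isUnit hx) n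
  exact ⟨n, by rwa [hn, Ideal.zero_eq_bot, Ideal.mem_bot] at hxn⟩

end IsLocalRing

namespace CategoryTheory

theorem End.pow_comp_eq_comp_pow {C : Type*} [Category C] {Z Y : C} {d : End Z} {b : End Y}
    {g : Z ⟶ Y} (h : d ≫ g = g ≫ b) (n : ℕ) : (d ^ n : End Z) ≫ g = g ≫ (b ^ n : End Y) := by
  induction n with
  | zero => exact (Category.id_comp g).trans (Category.comp_id g).symm
  | succ n ih => rw [pow_succ, pow_succ, End.mul_def, End.mul_def, Category.assoc, ih,
      ← Category.assoc, h, Category.assoc]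

theorem End.not_isUnit_of_comp_eq_comp_of_isNilpotent {C : Type*} [Category C] [Preadditive C]
    {Z Y : C} {d : End Z} {b : End Y} {g : Z ⟶ Y} (hg : g ≠ 0)
    (h : d ≫ g = g ≫ b) (hb : IsNilpotent b) : ¬IsUnit d := by
  obtain ⟨n, hn⟩ := hb
  intro hd
  have := (isUnit_iff_isIso _).1 (hd.pow n)
  apply hg
  rw [← cancel_epi (d ^ n : End Z), End.pow_comp_eq_comp_pow h, hn, Limits.comp_zero,
    Limits.comp_zero]

variable {k : Type*} [Semiring k] {C : Type*} [Category C] [Preadditive C] [Linear k C]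

def intertwiners {Z Y : C} (g : Z ⟶ Y) (N : Submodule k (Y ⟶ Y)) : Submodule k (Z ⟶ Z) where
  carrier := {d | ∃ b ∈ N, d ≫ g = g ≫ b}
  zero_mem' := ⟨0, N.zero_mem, by simp⟩
  add_mem' := by
    rintro d₁ d₂ ⟨b₁, hb₁, h₁⟩ ⟨b₂, hb₂, h₂⟩
    exact ⟨b₁ + b₂, N.add_mem hb₁ hb₂, by
      rw [Preadditive.add_comp, h₁, h₂, Preadditive.comp_add]⟩
  smul_mem' := by
    rintro t d ⟨b, hb, h⟩
    exact ⟨t • b, N.smul_mem t hb, by rw [Linear.smul_comp, h, Linear.comp_smul]⟩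

theorem isNilpotent_of_mem_intertwiners {Z Y : C} [IsLocalRing (End Z)]
    [IsArtinianRing (End Z)] {g : Z ⟶ Y} (hg : g ≠ 0) {N : Submodule k (Y ⟶ Y)}
    (hN : ∀ b ∈ N, IsNilpotent (show End Y from b))
    {d : End Z} (hd : d ∈ intertwiners g N) : IsNilpotent d := by
  obtain ⟨b, hb, h⟩ := hd
  exact IsLocalRing.isNilpotent_of_not_isUnit
    (End.not_isUnit_of_comp_eq_comp_of_isNilpotent hg h (hN b hb))

end CategoryTheory

open CategoryTheory

/-- Let `Z` have a local finite-dimensional endomorphism ring, `g₂ : Z ⟶ Y` a nonzero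
morphism and `N` a `k`-subspace of `End Y` consisting of nilpotent endomorphisms.  Then
`G' = { d' ∈ End Z : d' g₂ = g₂ b' for some b' ∈ N }` is a `k`-subspace of `End Z`, all of
whose elements are nilpotent; hence `1 - d'` is invertible for all `d' ∈ G'`. -/
theorem stabilizer_is_subspace_of_nilpotents
    {k : Type*} [Field k]
    {C : Type*} [Category C] [Preadditive C] [Linear k C]
    [∀ X Y : C, FiniteDimensional k (X ⟶ Y)]
    {Z Y : C} [IsLocalRing (End Z)]
    (g₂ : Z ⟶ Y) (hg₂ : g₂ ≠ 0)
    (N : Submodule k (Y ⟶ Y)) (hN : ∀ b' ∈ N, IsNilpotent (show End Y from b')) :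
    ∃ G' : Submodule k (Z ⟶ Z),
      (G' : Set (Z ⟶ Z)) = {d' : Z ⟶ Z | ∃ b' ∈ N, d' ≫ g₂ = g₂ ≫ b'} ∧
      ∀ d' ∈ G', IsNilpotent (show End Z from d') ∧
        IsUnit (1 - (show End Z from d')) := by
  have : Module.Finite k (End Z) := inferInstanceAs (FiniteDimensional k (Z ⟶ Z))
  have : IsArtinianRing (End Z) := .of_finite k (End Z)
  refine ⟨intertwiners g₂ N, rfl, fun d hd => ?_⟩
  have hd := isNilpotent_of_mem_intertwiners hg₂ hN hd
  exact ⟨hd, hd.isUnit_one_sub⟩
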